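/- Let b ≥ 1/2 and ζ > 0. Define I_ν(x) = Σ_{k=0}^∞ (x/2)^{2k+ν}/(k!·Γ(k+ν+1)) for x > 0, and q_τ(z,ζ,b) = (√(zζ)/τ)·(ζ/z)^b·exp(−(z²+ζ²)/(2τ))·I_{b−1/2}(zζ/τ) for τ, z > 0. Then the function G(τ,z) := q_τ(z,ζ,b) is C¹ in τ and C² in z on (0,∞) × (0,∞) and satisfies ∂G/∂τ = (1/2)∂²G/∂z² + (b/z)∂G/∂z there. -/

import Mathlib

/-- Modified Bessel function of the first kind,
`I_ν(x) = Σ_{k=0}^∞ (x/2)^{2k+ν}/(k!·Γ(k+ν+1))`. -/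
noncomputable def besselI (ν x : ℝ) : ℝ :=
  ∑' k : ℕ, (x / 2) ^ (2 * (k : ℝ) + ν) / ((Nat.factorial k : ℝ) * Real.Gamma ((k : ℝ) + ν + 1))

/-- Bessel heat kernel
`q_s(z,ζ,b) = (√(zζ)/s)·(ζ/z)^b·exp(−(z²+ζ²)/(2s))·I_{b−1/2}(zζ/s)`. -/
noncomputable def besselKernel (b s z ζ : ℝ) : ℝ :=
  Real.sqrt (z * ζ) / s * (ζ / z) ^ b * Real.exp (-(z ^ 2 + ζ ^ 2) / (2 * s)) *
    besselI (b - 1 / 2) (z * ζ / s)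

/-!
With `ν = b - 1/2` and the entire function `E_ν(u) = ∑ uᵏ / (k! Γ(k + ν + 1))` one has
`I_ν(x) = (x/2)^ν E_ν(x²/4)`, and the powers of `z`, `ζ`, `τ` in front of `E_ν` collapse to
`ζ^{2b} 2^{1/2-b} τ^{-(b+1/2)}`, so up to a constant
`q_τ(z) = τ^{-(b+1/2)} exp(-(z² + ζ²)/(2τ)) E_ν(z²ζ²/(4τ²))`.
Differentiating this product, `∂_τ q - ½ ∂_z² q - (b/z) ∂_z q` equals
`ζ²/(2τ²) · τ^{-(b+1/2)} exp(…)` times `E_ν - (ν + 1) E_ν' - u E_ν''` at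
`u = z²ζ²/(4τ²)`, and this vanishes because the coefficient recurrence
`(k + 1)(k + ν + 1) c_{k+1} = c_k` of `E_ν` is the ODE `u E'' + (ν + 1) E' = E`.
-/

open Real Filter Topology

noncomputable def powerSeriesSum (a : ℕ → ℝ) (u : ℝ) : ℝ := ∑' k, a k * u ^ k

def derivCoeff (a : ℕ → ℝ) (k : ℕ) : ℝ := (k + 1) * a (k + 1)

section PowerSeries

variable {a : ℕ → ℝ}

lemma natCast_mul_pow_pred_le {y R : ℝ} (hR : 1 ≤ R) (hy : |y| ≤ R) (k : ℕ) :
    k * |y| ^ (k - 1) ≤ (2 * R) ^ k := calc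
  k * |y| ^ (k - 1) ≤ 2 ^ k * R ^ k := by
    gcongr
    · exact_mod_cast Nat.lt_two_pow_self.le
    · exact (pow_le_pow_left₀ (abs_nonneg y) hy _).trans
        (pow_le_pow_right₀ hR (Nat.sub_le k 1))
  _ = (2 * R) ^ k := (mul_pow 2 R k).symm

lemma norm_mul_termDeriv_le {y R : ℝ} (hR : 1 ≤ R) (hy : |y| ≤ R) (k : ℕ) :
    ‖a k * (k * y ^ (k - 1))‖ ≤ ‖a k * (2 * R) ^ k‖ := by
  rw [norm_mul, norm_mul, norm_mul, norm_pow, norm_pow, Real.norm_natCast, Real.norm_eq_abs y,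
    Real.norm_of_nonneg (by linarith : (0 : ℝ) ≤ 2 * R)]
  gcongr
  exact natCast_mul_pow_pred_le hR hy k

variable (ha : ∀ r, Summable fun k => a k * r ^ k)
include ha

lemma hasSum_derivCoeff (y : ℝ) :
    HasSum (fun k => derivCoeff a k * y ^ k) (∑' k, a k * (k * y ^ (k - 1))) := by
  have hR : 1 ≤ |y| + 1 := by linarith [abs_nonneg y]
  have hsum : Summable fun k => a k * (k * y ^ (k - 1)) :=
    .of_norm_bounded (ha _).norm (norm_mul_termDeriv_le hR (le_add_of_nonneg_right zero_le_one))
  have hshift : (fun k => derivCoeff a k * y ^ k)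
      = fun k : ℕ => a (k + 1) * (((k + 1 : ℕ) : ℝ) * y ^ (k + 1 - 1)) := by
    funext k
    simp only [derivCoeff, Nat.cast_succ, Nat.add_sub_cancel]
    ring
  rw [hshift]
  simpa using (hasSum_nat_add_iff' 1).mpr hsum.hasSum

theorem hasDerivAt_powerSeriesSum (u : ℝ) :
    HasDerivAt (powerSeriesSum a) (powerSeriesSum (derivCoeff a) u) u := by
  set R := |u| + 1
  have hR : 1 ≤ R := by linarith [abs_nonneg u]
  have hu : u ∈ Metric.ball (0 : ℝ) R := by simp [R]
  rw [powerSeriesSum, (hasSum_derivCoeff ha u).tsum_eq]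
  refine hasDerivAt_tsum_of_isPreconnected (ha (2 * R)).norm Metric.isOpen_ball
    (convex_ball 0 R).isPreconnected (fun k y _ => (hasDerivAt_pow k y).const_mul (a k))
    (fun k y hy => norm_mul_termDeriv_le hR ?_ k) hu (ha u) hu
  simpa using (mem_ball_zero_iff.mp hy).le

lemma summable_derivCoeff (r : ℝ) : Summable fun k => derivCoeff a k * r ^ k :=
  (hasSum_derivCoeff ha r).summable

lemma hasSum_natCast_mul (u : ℝ) :
    HasSum (fun k => k * a k * u ^ k) (u * powerSeriesSum (derivCoeff a) u) := by
  have hshift : (fun k : ℕ => ((k + 1 : ℕ) : ℝ) * a (k + 1) * u ^ (k + 1))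
      = fun k => u * (derivCoeff a k * u ^ k) := by
    funext k
    simp only [derivCoeff, Nat.cast_succ, pow_succ]
    ring
  rw [← hasSum_nat_add_iff' 1, hshift]
  simpa [powerSeriesSum] using (summable_derivCoeff ha u).hasSum.mul_left u

omit ha in
theorem contDiff_powerSeriesSum (ha : ∀ r, Summable fun k => a k * r ^ k) (n : ℕ) :
    ContDiff ℝ n (powerSeriesSum a) := by
  induction n generalizing a with
  | zero => exact contDiff_zero.mpr (continuous_iff_continuousAt.mpr fun u =>
      (hasDerivAt_powerSeriesSum ha u).continuousAt)
  | succ n ih =>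
    rw [Nat.cast_succ, contDiff_succ_iff_deriv]
    refine ⟨fun u => (hasDerivAt_powerSeriesSum ha u).differentiableAt, by simp, ?_⟩
    rw [funext fun u => (hasDerivAt_powerSeriesSum ha u).deriv]
    exact ih (summable_derivCoeff ha)

end PowerSeries

section BesselSeries

noncomputable def besselCoeff (ν : ℝ) (k : ℕ) : ℝ :=
  1 / ((k.factorial : ℝ) * Gamma (k + ν + 1))

noncomputable def besselSeries (ν : ℝ) : ℝ → ℝ := powerSeriesSum (besselCoeff ν)

lemma Real.Gamma_le_Gamma_natCast_add {x : ℝ} (hx : 1 ≤ x) (k : ℕ) :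
    Gamma x ≤ Gamma (k + x) := by
  induction k with
  | zero => simp
  | succ k ih =>
    have hkx : 1 ≤ k + x := by linarith [k.cast_nonneg (α := ℝ)]
    rw [Nat.cast_succ, add_right_comm, Gamma_add_one (by linarith)]
    nlinarith [Gamma_pos_of_pos (by linarith : 0 < k + x)]

variable {ν : ℝ}

lemma summable_besselCoeff_mul_pow (hν : 0 ≤ ν) (r : ℝ) :
    Summable fun k => besselCoeff ν k * r ^ k := by
  have hΓ : 0 < Gamma (ν + 1) := Gamma_pos_of_pos (by linarith)
  refine .of_norm_bounded ((summable_pow_div_factorial |r|).mul_left (Gamma (ν + 1))⁻¹)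
    fun k => ?_
  have hΓk : Gamma (ν + 1) ≤ Gamma (k + ν + 1) := by
    simpa [add_assoc] using Real.Gamma_le_Gamma_natCast_add (by linarith : 1 ≤ ν + 1) k
  have hΓk' : 0 < Gamma (k + ν + 1) := hΓ.trans_le hΓk
  rw [besselCoeff, norm_mul, norm_pow, Real.norm_eq_abs r, Real.norm_of_nonneg (by positivity)]
  calc 1 / ((k.factorial : ℝ) * Gamma (k + ν + 1)) * |r| ^ k
      ≤ 1 / ((k.factorial : ℝ) * Gamma (ν + 1)) * |r| ^ k := by gcongr
    _ = (Gamma (ν + 1))⁻¹ * (|r| ^ k / k.factorial) := by ring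

lemma besselCoeff_eq_derivCoeff (hν : -1 < ν) (k : ℕ) :
    besselCoeff ν k = (k + ν + 1) * derivCoeff (besselCoeff ν) k := by
  have hk : 0 < (k : ℝ) + ν + 1 := by linarith [k.cast_nonneg (α := ℝ)]
  have hΓ := (Gamma_pos_of_pos hk).ne'
  simp only [derivCoeff, besselCoeff, Nat.factorial_succ, Nat.cast_mul, Nat.cast_succ]
  rw [add_right_comm _ (1 : ℝ) ν, Gamma_add_one hk.ne']
  field_simp

theorem besselSeries_ode (hν : 0 ≤ ν) (u : ℝ) :
    besselSeries ν u = (ν + 1) * powerSeriesSum (derivCoeff (besselCoeff ν)) u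
      + u * powerSeriesSum (derivCoeff (derivCoeff (besselCoeff ν))) u := by
  have hc := summable_besselCoeff_mul_pow hν
  have hrhs := ((summable_derivCoeff hc u).hasSum.mul_left (ν + 1)).add
    (hasSum_natCast_mul (summable_derivCoeff hc) u)
  refine (hc u).hasSum.unique (hrhs.congr_fun fun k => ?_)
  rw [besselCoeff_eq_derivCoeff (by linarith) k]
  ring

lemma besselI_eq_rpow_mul_besselSeries {x : ℝ} (hx : 0 < x) (ν : ℝ) :
    besselI ν x = (x / 2) ^ ν * besselSeries ν (x ^ 2 / 4) := by
  rw [besselI, besselSeries, powerSeriesSum, ← tsum_mul_left]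
  congr 1 with k
  have hpow : (x / 2) ^ (2 * (k : ℝ) + ν) = (x / 2) ^ ν * (x ^ 2 / 4) ^ k := by
    rw [rpow_add (by positivity), mul_comm, ← Nat.cast_ofNat, ← Nat.cast_mul, rpow_natCast,
      pow_mul]
    ring
  rw [hpow, besselCoeff]
  ring

end BesselSeries

section KernelProfile

noncomputable def kernelProfile (E : ℝ → ℝ) (b ζ t w : ℝ) : ℝ :=
  t ^ (-(b + 1 / 2)) * exp (-(w ^ 2 + ζ ^ 2) / (2 * t)) * E (w ^ 2 * ζ ^ 2 / (4 * t ^ 2))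

variable {E E' E'' : ℝ → ℝ} {b ζ t w : ℝ}

lemma hasDerivAt_kernelProfile_space (hE : ∀ u, HasDerivAt E (E' u) u) (ht : t ≠ 0) (w : ℝ) :
    HasDerivAt (kernelProfile E b ζ t)
      (-(w / t) * kernelProfile E b ζ t w + w * ζ ^ 2 / (2 * t ^ 2) * kernelProfile E' b ζ t w)
      w := by
  have hexp : HasDerivAt (fun w => -(w ^ 2 + ζ ^ 2) / (2 * t)) (-(w / t)) w := by
    refine (((hasDerivAt_pow 2 w).add_const _).neg.div_const _).congr_deriv ?_
    field_simp
    ring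
  have harg : HasDerivAt (fun w => w ^ 2 * ζ ^ 2 / (4 * t ^ 2)) (w * ζ ^ 2 / (2 * t ^ 2)) w := by
    refine (((hasDerivAt_pow 2 w).mul_const _).div_const _).congr_deriv ?_
    field_simp
    ring
  refine ((hexp.exp.const_mul _).mul ((hE _).comp w harg)).congr_deriv ?_
  simp only [kernelProfile, Function.comp_apply]
  ring

lemma hasDerivAt_kernelProfile_time (hE : ∀ u, HasDerivAt E (E' u) u) (ht : t ≠ 0) (w : ℝ) :
    HasDerivAt (fun t => kernelProfile E b ζ t w)
      ((-(b + 1 / 2) / t + (w ^ 2 + ζ ^ 2) / (2 * t ^ 2)) * kernelProfile E b ζ t w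
        - w ^ 2 * ζ ^ 2 / (2 * t ^ 3) * kernelProfile E' b ζ t w) t := by
  have hpow :
      HasDerivAt (fun t => t ^ (-(b + 1 / 2))) (-(b + 1 / 2) * t ^ (-(b + 1 / 2) - 1)) t :=
    hasDerivAt_rpow_const (Or.inl ht)
  have hexp :
      HasDerivAt (fun t => -(w ^ 2 + ζ ^ 2) / (2 * t)) ((w ^ 2 + ζ ^ 2) / (2 * t ^ 2)) t := by
    refine ((hasDerivAt_const t (-(w ^ 2 + ζ ^ 2))).div ((hasDerivAt_id' t).const_mul 2)
      (mul_ne_zero two_ne_zero ht)).congr_deriv ?_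
    field_simp
    ring
  have harg :
      HasDerivAt (fun t => w ^ 2 * ζ ^ 2 / (4 * t ^ 2)) (-(w ^ 2 * ζ ^ 2 / (2 * t ^ 3))) t := by
    refine ((hasDerivAt_const t (w ^ 2 * ζ ^ 2)).div ((hasDerivAt_pow 2 t).const_mul 4)
      (by positivity)).congr_deriv ?_
    field_simp
    ring
  refine ((hpow.mul hexp.exp).mul ((hE _).comp t harg)).congr_deriv ?_
  rw [rpow_sub_one ht]
  simp only [kernelProfile, Function.comp_apply, Pi.mul_apply]
  field_simp
  ring

lemma contDiff_kernelProfile_space {n : WithTop ℕ∞} (hE : ContDiff ℝ n E) (b ζ t : ℝ) :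
    ContDiff ℝ n (kernelProfile E b ζ t) := by
  unfold kernelProfile
  fun_prop

lemma contDiffAt_kernelProfile_time {n : WithTop ℕ∞} (hE : ContDiff ℝ n E) (ht : t ≠ 0)
    (b ζ w : ℝ) :
    ContDiffAt ℝ n (fun t => kernelProfile E b ζ t w) t := by
  unfold kernelProfile
  fun_prop (disch := simpa)

lemma deriv_kernelProfile_space (hE : ∀ u, HasDerivAt E (E' u) u) (ht : t ≠ 0) :
    deriv (kernelProfile E b ζ t) = fun w =>
      -(w / t) * kernelProfile E b ζ t w + w * ζ ^ 2 / (2 * t ^ 2) * kernelProfile E' b ζ t w :=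
  funext fun w => (hasDerivAt_kernelProfile_space hE ht w).deriv

lemma hasDerivAt_deriv_kernelProfile_space (hE : ∀ u, HasDerivAt E (E' u) u)
    (hE' : ∀ u, HasDerivAt E' (E'' u) u) (ht : t ≠ 0) (w : ℝ) :
    HasDerivAt (deriv (kernelProfile E b ζ t))
      ((w ^ 2 / t ^ 2 - 1 / t) * kernelProfile E b ζ t w
        + (ζ ^ 2 / (2 * t ^ 2) - w ^ 2 * ζ ^ 2 / t ^ 3) * kernelProfile E' b ζ t w
        + w ^ 2 * ζ ^ 4 / (4 * t ^ 4) * kernelProfile E'' b ζ t w) w := by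
  rw [deriv_kernelProfile_space hE ht]
  refine ((((hasDerivAt_id' w).div_const t).neg.mul
      (hasDerivAt_kernelProfile_space hE ht w)).add
    ((((hasDerivAt_id' w).mul_const (ζ ^ 2)).div_const (2 * t ^ 2)).mul
      (hasDerivAt_kernelProfile_space hE' ht w))).congr_deriv ?_
  simp only [Pi.neg_apply]
  field_simp
  ring

theorem kernelProfile_pde (hE : ∀ u, HasDerivAt E (E' u) u) (hE' : ∀ u, HasDerivAt E' (E'' u) u)
    (hode : ∀ u, E u = (b + 1 / 2) * E' u + u * E'' u) (ht : t ≠ 0) (hw : w ≠ 0) :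
    deriv (fun t => kernelProfile E b ζ t w) t
      = 1 / 2 * deriv (deriv (kernelProfile E b ζ t)) w
        + b / w * deriv (kernelProfile E b ζ t) w := by
  rw [(hasDerivAt_kernelProfile_time hE ht w).deriv,
    (hasDerivAt_deriv_kernelProfile_space hE hE' ht w).deriv,
    (hasDerivAt_kernelProfile_space hE ht w).deriv]
  simp only [kernelProfile]
  rw [hode]
  field_simp
  ring

end KernelProfile

lemma besselKernel_prefactor {b ζ t z : ℝ} (hζ : 0 < ζ) (ht : 0 < t) (hz : 0 < z) :
    √(z * ζ) / t * (ζ / z) ^ b * (z * ζ / t / 2) ^ (b - 1 / 2)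
      = ζ ^ (2 * b) * 2 ^ (1 / 2 - b) * t ^ (-(b + 1 / 2)) := by
  refine log_injOn_pos (Set.mem_Ioi.mpr (by positivity)) (Set.mem_Ioi.mpr (by positivity)) ?_
  simp (disch := positivity) only [log_mul, log_div, log_rpow, log_sqrt]
  ring

theorem besselKernel_eq_mul_kernelProfile {b ζ t z : ℝ} (hζ : 0 < ζ) (ht : 0 < t)
    (hz : 0 < z) :
    besselKernel b t z ζ
      = ζ ^ (2 * b) * 2 ^ (1 / 2 - b) * kernelProfile (besselSeries (b - 1 / 2)) b ζ t z := by
  rw [besselKernel, besselI_eq_rpow_mul_besselSeries (by positivity), kernelProfile,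
    show (z * ζ / t) ^ 2 / 4 = z ^ 2 * ζ ^ 2 / (4 * t ^ 2) by ring]
  linear_combination exp (-(z ^ 2 + ζ ^ 2) / (2 * t)) *
    besselSeries (b - 1 / 2) (z ^ 2 * ζ ^ 2 / (4 * t ^ 2)) * besselKernel_prefactor hζ ht hz

theorem besselKernel_solves_bessel_pde
    (b ζ : ℝ) (hb : 1 / 2 ≤ b) (hζ : 0 < ζ) :
    ∀ τ z : ℝ, 0 < τ → 0 < z →
      ContDiffAt ℝ 1 (fun t => besselKernel b t z ζ) τ ∧
      ContDiffAt ℝ 2 (fun w => besselKernel b τ w ζ) z ∧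
      deriv (fun t => besselKernel b t z ζ) τ
        = 1 / 2 * deriv (fun w => deriv (fun w' => besselKernel b τ w' ζ) w) z
          + b / z * deriv (fun w => besselKernel b τ w ζ) z := by
  intro τ z hτ hz
  have hc := summable_besselCoeff_mul_pow (by linarith : 0 ≤ b - 1 / 2)
  have hE : ContDiff ℝ 2 (besselSeries (b - 1 / 2)) := contDiff_powerSeriesSum hc 2
  set K := ζ ^ (2 * b) * 2 ^ (1 / 2 - b)
  have hEq_t : (fun t => besselKernel b t z ζ) =ᶠ[𝓝 τ]
      fun t => K * kernelProfile (besselSeries (b - 1 / 2)) b ζ t z :=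
    (eventually_gt_nhds hτ).mono fun t ht => besselKernel_eq_mul_kernelProfile hζ ht hz
  have hEq_z : (fun w => besselKernel b τ w ζ) =ᶠ[𝓝 z]
      fun w => K * kernelProfile (besselSeries (b - 1 / 2)) b ζ τ w :=
    (eventually_gt_nhds hz).mono fun w hw => besselKernel_eq_mul_kernelProfile hζ hτ hw
  refine ⟨(contDiffAt_const.mul ((contDiffAt_kernelProfile_time hE hτ.ne' b ζ z).of_le
      one_le_two)).congr_of_eventuallyEq hEq_t,
    (contDiffAt_const.mul (contDiff_kernelProfile_space hE b ζ τ).contDiffAt).congr_of_eventuallyEq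
      hEq_z, ?_⟩
  rw [hEq_z.deriv.deriv_eq, hEq_z.deriv_eq, hEq_t.deriv_eq]
  simp only [deriv_const_mul_field']
  rw [kernelProfile_pde (E := besselSeries (b - 1 / 2)) (hasDerivAt_powerSeriesSum hc)
    (hasDerivAt_powerSeriesSum (summable_derivCoeff hc))
    (fun u => by rw [besselSeries_ode (by linarith) u]; ring) hτ.ne' hz.ne']
  ring
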